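/- arXiv:2208.14424 — 2 statements merged into one kernel-verified Lean document; each statement's English description precedes it below -/
import Mathlib

section
/- Let D^{(1)}, …, D^{(k)} be m×m doubly stochastic matrices and let 𝒟^{(j)} be the quantum channel on m×m matrices defined by 𝒟^{(j)}(ρ) := ∑_{x,x'} D^{(j)}_{x'x} ρ_{xx} E_{x'x'}, where ρ_{xx} are the diagonal entries of ρ and E_{x'x'} the diagonal matrix units. Let ℱ^{(1)}, …, ℱ^{(k)} be completely positive maps from n×n to n'×n' matrices such that ∑_{j=1}^k ℱ^{(j)} is trace-preserving. Then 𝒩 := ∑_{j=1}^k 𝒟^{(j)} ⊗ ℱ^{(j)} is a quantum channel from matrices on ℂ^m ⊗ ℂ^n to matrices on ℂ^m ⊗ ℂ^{n'} that is locally balanced, i.e., both conditionally unital and A ↛ B' semi-causal. -/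
open Matrix Kronecker BigOperators
open scoped ENNReal ComplexOrder

noncomputable section

/-- A quantum state: a positive semidefinite matrix of trace one. -/
def IsState {α : Type} [Fintype α] (ρ : Matrix α α ℂ) : Prop :=
  ρ.PosSemidef ∧ ρ.trace = 1

/-- The Choi matrix `∑ i j, E i j ⊗ N (E i j)` of a map between matrix algebras. -/
def choiMatrix {α β : Type} [Fintype α] [DecidableEq α] [Fintype β]
    (N : Matrix α α ℂ → Matrix β β ℂ) : Matrix (α × β) (α × β) ℂ :=
  ∑ i : α, ∑ j : α, Matrix.single i j (1 : ℂ) ⊗ₖ N (Matrix.single i j 1)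

/-- A quantum channel: a linear, trace-preserving and completely positive map. -/
def IsChannel {α β : Type} [Fintype α] [DecidableEq α] [Fintype β]
    (N : Matrix α α ℂ → Matrix β β ℂ) : Prop :=
  IsLinearMap ℂ N ∧ (∀ X, (N X).trace = X.trace) ∧ (choiMatrix N).PosSemidef

/-- Partial trace over the first tensor factor. -/
def trA {α β : Type} [Fintype α] (ρ : Matrix (α × β) (α × β) ℂ) : Matrix β β ℂ :=
  Matrix.of fun j j' => ∑ i : α, ρ (i, j) (i, j')

/-- The uniform (maximally mixed) state of dimension `n`. -/
def unif (n : ℕ) : Matrix (Fin n) (Fin n) ℂ := (n : ℂ)⁻¹ • 1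

/-- The tensor extension `M ⊗ id` of a map `M` acting on the first factor. -/
def tensorIdRight {a a' : ℕ} (b : ℕ)
    (M : Matrix (Fin a) (Fin a) ℂ → Matrix (Fin a') (Fin a') ℂ)
    (X : Matrix (Fin a × Fin b) (Fin a × Fin b) ℂ) :
    Matrix (Fin a' × Fin b) (Fin a' × Fin b) ℂ :=
  Matrix.of fun p q => M (Matrix.of fun k k' => X (k, p.2) (k', q.2)) p.1 q.1

/-- A conditionally unital bipartite channel: it sends every state of the form
`u_A ⊗ ρ_B` to a state of the form `u_C ⊗ σ_{B'}`. -/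
def CondUnital {a b c b' : ℕ}
    (N : Matrix (Fin a × Fin b) (Fin a × Fin b) ℂ → Matrix (Fin c × Fin b') (Fin c × Fin b') ℂ) :
    Prop :=
  ∀ ρB : Matrix (Fin b) (Fin b) ℂ, IsState ρB →
    ∃ σ : Matrix (Fin b') (Fin b') ℂ, IsState σ ∧ N (unif a ⊗ₖ ρB) = unif c ⊗ₖ σ

/-- An `A ↛ B'` semi-causal bipartite channel. -/
def SemiCausal {a b c b' : ℕ}
    (N : Matrix (Fin a × Fin b) (Fin a × Fin b) ℂ → Matrix (Fin c × Fin b') (Fin c × Fin b') ℂ) :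
    Prop :=
  ∀ M : Matrix (Fin a) (Fin a) ℂ → Matrix (Fin a) (Fin a) ℂ, IsChannel M →
    ∀ X : Matrix (Fin a × Fin b) (Fin a × Fin b) ℂ,
      trA (N (tensorIdRight b M X)) = trA (N X)

/-- A locally balanced channel: a quantum channel that is both conditionally unital
and `A ↛ B'` semi-causal. -/
def LocallyBalanced {a b c b' : ℕ}
    (N : Matrix (Fin a × Fin b) (Fin a × Fin b) ℂ → Matrix (Fin c × Fin b') (Fin c × Fin b') ℂ) :
    Prop :=
  IsChannel N ∧ CondUnital N ∧ SemiCausal N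

/-- Conditional majorization `ρ ≻_A σ` with respect to the first system. -/
def CondMaj {a b a' b' : ℕ}
    (ρ : Matrix (Fin a × Fin b) (Fin a × Fin b) ℂ)
    (σ : Matrix (Fin a' × Fin b') (Fin a' × Fin b') ℂ) : Prop :=
  (a' ≥ a ∧ ∃ (V : Matrix (Fin a') (Fin a) ℂ)
      (N : Matrix (Fin a × Fin b) (Fin a × Fin b) ℂ →
           Matrix (Fin a × Fin b') (Fin a × Fin b') ℂ),
      Vᴴ * V = 1 ∧ LocallyBalanced N ∧
      σ = (V ⊗ₖ (1 : Matrix (Fin b') (Fin b') ℂ)) * N ρ *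
            (V ⊗ₖ (1 : Matrix (Fin b') (Fin b') ℂ))ᴴ) ∨
  (a ≥ a' ∧ ∃ (U : Matrix (Fin a) (Fin a') ℂ)
      (N : Matrix (Fin a × Fin b) (Fin a × Fin b) ℂ →
           Matrix (Fin a × Fin b') (Fin a × Fin b') ℂ),
      Uᴴ * U = 1 ∧ LocallyBalanced N ∧
      (U ⊗ₖ (1 : Matrix (Fin b') (Fin b') ℂ)) * σ *
          (U ⊗ₖ (1 : Matrix (Fin b') (Fin b') ℂ))ᴴ = N ρ)

/-- Relaxed conditional majorization `ρ ≻^A σ`: as `CondMaj`, with the locally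
balanced channel replaced by a mere conditionally unital channel. -/
def RelCondMaj {a b a' b' : ℕ}
    (ρ : Matrix (Fin a × Fin b) (Fin a × Fin b) ℂ)
    (σ : Matrix (Fin a' × Fin b') (Fin a' × Fin b') ℂ) : Prop :=
  (a' ≥ a ∧ ∃ (V : Matrix (Fin a') (Fin a) ℂ)
      (N : Matrix (Fin a × Fin b) (Fin a × Fin b) ℂ →
           Matrix (Fin a × Fin b') (Fin a × Fin b') ℂ),
      Vᴴ * V = 1 ∧ (IsChannel N ∧ CondUnital N) ∧
      σ = (V ⊗ₖ (1 : Matrix (Fin b') (Fin b') ℂ)) * N ρ *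
            (V ⊗ₖ (1 : Matrix (Fin b') (Fin b') ℂ))ᴴ) ∨
  (a ≥ a' ∧ ∃ (U : Matrix (Fin a) (Fin a') ℂ)
      (N : Matrix (Fin a × Fin b) (Fin a × Fin b) ℂ →
           Matrix (Fin a × Fin b') (Fin a × Fin b') ℂ),
      Uᴴ * U = 1 ∧ (IsChannel N ∧ CondUnital N) ∧
      (U ⊗ₖ (1 : Matrix (Fin b') (Fin b') ℂ)) * σ *
          (U ⊗ₖ (1 : Matrix (Fin b') (Fin b') ℂ))ᴴ = N ρ)

/-- Reordering `(A × B) × (A' × B') ≃ AA' × BB'`. -/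
def sysEquiv (a b a' b' : ℕ) :
    (Fin a × Fin b) × (Fin a' × Fin b') ≃ Fin (a * a') × Fin (b * b') :=
  (Equiv.prodProdProdComm (Fin a) (Fin b) (Fin a') (Fin b')).trans
    (finProdFinEquiv.prodCongr finProdFinEquiv)

/-- The tensor product `ρ_{AB} ⊗ σ_{A'B'}` regarded as a bipartite state with
first system `AA'` and second system `BB'`. -/
def tensorState {a b a' b' : ℕ}
    (ρ : Matrix (Fin a × Fin b) (Fin a × Fin b) ℂ)
    (σ : Matrix (Fin a' × Fin b') (Fin a' × Fin b') ℂ) :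
    Matrix (Fin (a * a') × Fin (b * b')) (Fin (a * a') × Fin (b * b')) ℂ :=
  Matrix.reindex (sysEquiv a b a' b') (sysEquiv a b a' b') (ρ ⊗ₖ σ)

/-- Reindexing of a matrix on a product of `Fin` types as a matrix on a single `Fin` type. -/
def mreindex {a b : ℕ} (ρ : Matrix (Fin a × Fin b) (Fin a × Fin b) ℂ) :
    Matrix (Fin (a * b)) (Fin (a * b)) ℂ :=
  Matrix.reindex finProdFinEquiv finProdFinEquiv ρ

/-- Majorization `ρ ≻ σ` between states of possibly different dimensions. -/
def Maj {n n' : ℕ} (ρ : Matrix (Fin n) (Fin n) ℂ) (σ : Matrix (Fin n') (Fin n') ℂ) : Prop :=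
  (n' ≥ n ∧ ∃ (V : Matrix (Fin n') (Fin n) ℂ)
      (N : Matrix (Fin n) (Fin n) ℂ → Matrix (Fin n) (Fin n) ℂ),
      Vᴴ * V = 1 ∧ IsChannel N ∧ N 1 = 1 ∧ σ = V * N ρ * Vᴴ) ∨
  (n ≥ n' ∧ ∃ (U : Matrix (Fin n) (Fin n') ℂ)
      (N : Matrix (Fin n) (Fin n) ℂ → Matrix (Fin n) (Fin n) ℂ),
      Uᴴ * U = 1 ∧ IsChannel N ∧ N 1 = 1 ∧ U * σ * Uᴴ = N ρ)

/-- The conditional min-entropy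
`H_min(A|B)_ρ = - log₂ min {λ ≥ 0 : λ I_A ⊗ ρ_B - ρ_{AB} ≽ 0}`. -/
def condMinEntropy {a b : ℕ} (ρ : Matrix (Fin a × Fin b) (Fin a × Fin b) ℂ) : ℝ :=
  - Real.logb 2 (sInf {l : ℝ | 0 ≤ l ∧
      (l • ((1 : Matrix (Fin a) (Fin a) ℂ) ⊗ₖ trA ρ) - ρ).PosSemidef})

/-- The conditional min-entropy `H_min^↑(A|B)_ρ`, optimized over states `σ_B`. -/
def condMinEntropyUp {a b : ℕ} (ρ : Matrix (Fin a × Fin b) (Fin a × Fin b) ℂ) : ℝ :=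
  sSup {r : ℝ | ∃ σ : Matrix (Fin b) (Fin b) ℂ, IsState σ ∧
    (∃ l : ℝ, 0 ≤ l ∧ (l • ((1 : Matrix (Fin a) (Fin a) ℂ) ⊗ₖ σ) - ρ).PosSemidef) ∧
    r = - Real.logb 2 (sInf {l : ℝ | 0 ≤ l ∧
      (l • ((1 : Matrix (Fin a) (Fin a) ℂ) ⊗ₖ σ) - ρ).PosSemidef})}

/-- The maximally entangled state of rank `k` on `ℂ^k ⊗ ℂ^k`. -/
def maxEnt (k : ℕ) : Matrix (Fin k × Fin k) (Fin k × Fin k) ℂ :=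
  Matrix.of fun p q => if p.1 = p.2 ∧ q.1 = q.2 then (k : ℂ)⁻¹ else 0

/-- The quantum channel on `m × m` matrices induced by a doubly stochastic matrix `D`,
`ρ ↦ ∑ x x', D x' x * ρ x x • E x' x'`. -/
def dsChannel {m : ℕ} (D : Matrix (Fin m) (Fin m) ℝ) :
    Matrix (Fin m) (Fin m) ℂ → Matrix (Fin m) (Fin m) ℂ :=
  fun ρ => ∑ x : Fin m, ∑ x' : Fin m,
    (((D x' x : ℝ) : ℂ) * ρ x x) • Matrix.single x' x' (1 : ℂ)

/-- A doubly stochastic matrix: nonnegative entries, all row and column sums equal one. -/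
def IsDoublyStochastic {m : ℕ} (D : Matrix (Fin m) (Fin m) ℝ) : Prop :=
  (∀ x x', 0 ≤ D x x') ∧ (∀ x, ∑ x', D x x' = 1) ∧ (∀ x', ∑ x, D x x' = 1)

/-- The tensor product `M ⊗ F` of two (linear) maps between matrix algebras. -/
def tensorMap {m m' n n' : ℕ}
    (M : Matrix (Fin m) (Fin m) ℂ → Matrix (Fin m') (Fin m') ℂ)
    (F : Matrix (Fin n) (Fin n) ℂ → Matrix (Fin n') (Fin n') ℂ) :
    Matrix (Fin m × Fin n) (Fin m × Fin n) ℂ →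
      Matrix (Fin m' × Fin n') (Fin m' × Fin n') ℂ :=
  fun X => ∑ k : Fin m, ∑ k' : Fin m, ∑ l : Fin n, ∑ l' : Fin n,
    X (k, l) (k', l') •
      (M (Matrix.single k k' 1) ⊗ₖ F (Matrix.single l l' 1))

/-- A conditional entropy: a real-valued function on all bipartite states of all finite
dimensions that is not identically zero, reverses conditional majorization, and is
additive on tensor products. -/
structure CondEntropy where
  H : ∀ (a b : ℕ), Matrix (Fin a × Fin b) (Fin a × Fin b) ℂ → ℝ
  nontrivial : ∃ (a b : ℕ) (ρ : Matrix (Fin a × Fin b) (Fin a × Fin b) ℂ),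
    IsState ρ ∧ H a b ρ ≠ 0
  mono : ∀ (a b a' b' : ℕ) (ρ : Matrix (Fin a × Fin b) (Fin a × Fin b) ℂ)
    (σ : Matrix (Fin a' × Fin b') (Fin a' × Fin b') ℂ),
    IsState ρ → IsState σ → CondMaj ρ σ → H a b ρ ≤ H a' b' σ
  additive : ∀ (a b a' b' : ℕ) (ρ : Matrix (Fin a × Fin b) (Fin a × Fin b) ℂ)
    (σ : Matrix (Fin a' × Fin b') (Fin a' × Fin b') ℂ),
    IsState ρ → IsState σ →
    H (a * a') (b * b') (tensorState ρ σ) = H a b ρ + H a' b' σ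

/-- A conditional entropy is normalized if `H(A|B) = 1` on `u⁽²⁾ ⊗ ρ_B`. -/
def CondEntropy.Normalized (E : CondEntropy) : Prop :=
  ∀ (b : ℕ) (ρB : Matrix (Fin b) (Fin b) ℂ), IsState ρB →
    E.H 2 b (unif 2 ⊗ₖ ρB) = 1

/-- A relaxed conditional entropy: as `CondEntropy`, but monotone under the relaxed
conditional majorization. -/
structure RelCondEntropy where
  H : ∀ (a b : ℕ), Matrix (Fin a × Fin b) (Fin a × Fin b) ℂ → ℝ
  nontrivial : ∃ (a b : ℕ) (ρ : Matrix (Fin a × Fin b) (Fin a × Fin b) ℂ),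
    IsState ρ ∧ H a b ρ ≠ 0
  mono : ∀ (a b a' b' : ℕ) (ρ : Matrix (Fin a × Fin b) (Fin a × Fin b) ℂ)
    (σ : Matrix (Fin a' × Fin b') (Fin a' × Fin b') ℂ),
    IsState ρ → IsState σ → RelCondMaj ρ σ → H a b ρ ≤ H a' b' σ
  additive : ∀ (a b a' b' : ℕ) (ρ : Matrix (Fin a × Fin b) (Fin a × Fin b) ℂ)
    (σ : Matrix (Fin a' × Fin b') (Fin a' × Fin b') ℂ),
    IsState ρ → IsState σ →
    H (a * a') (b * b') (tensorState ρ σ) = H a b ρ + H a' b' σ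

/-- A relaxed conditional entropy is normalized if `H(A|B) = 1` on `u⁽²⁾ ⊗ ρ_B`. -/
def RelCondEntropy.Normalized (E : RelCondEntropy) : Prop :=
  ∀ (b : ℕ) (ρB : Matrix (Fin b) (Fin b) ℂ), IsState ρB →
    E.H 2 b (unif 2 ⊗ₖ ρB) = 1

/-- An entropy: a real-valued function on all states of all finite dimensions that is
not identically zero, reverses majorization, and is additive on tensor products. -/
structure Entropy where
  H : ∀ (n : ℕ), Matrix (Fin n) (Fin n) ℂ → ℝ
  nontrivial : ∃ (n : ℕ) (ρ : Matrix (Fin n) (Fin n) ℂ), IsState ρ ∧ H n ρ ≠ 0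
  mono : ∀ (n n' : ℕ) (ρ : Matrix (Fin n) (Fin n) ℂ) (σ : Matrix (Fin n') (Fin n') ℂ),
    IsState ρ → IsState σ → Maj ρ σ → H n ρ ≤ H n' σ
  additive : ∀ (n n' : ℕ) (ρ : Matrix (Fin n) (Fin n) ℂ) (σ : Matrix (Fin n') (Fin n') ℂ),
    IsState ρ → IsState σ → H (n * n') (mreindex (ρ ⊗ₖ σ)) = H n ρ + H n' σ

/-- A relative entropy: an `[0,∞]`-valued function on pairs of states of equal dimension
that is not identically zero, monotone under quantum channels, and additive on
tensor products. -/
structure RelEntropy where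
  D : ∀ (n : ℕ), Matrix (Fin n) (Fin n) ℂ → Matrix (Fin n) (Fin n) ℂ → ℝ≥0∞
  nontrivial : ∃ (n : ℕ) (ρ σ : Matrix (Fin n) (Fin n) ℂ),
    IsState ρ ∧ IsState σ ∧ D n ρ σ ≠ 0
  mono : ∀ (n m : ℕ) (N : Matrix (Fin n) (Fin n) ℂ → Matrix (Fin m) (Fin m) ℂ),
    IsChannel N → ∀ ρ σ : Matrix (Fin n) (Fin n) ℂ,
      IsState ρ → IsState σ → D m (N ρ) (N σ) ≤ D n ρ σ
  additive : ∀ (n m : ℕ) (ρ σ : Matrix (Fin n) (Fin n) ℂ) (ω τ : Matrix (Fin m) (Fin m) ℂ),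
    IsState ρ → IsState σ → IsState ω → IsState τ →
    D (n * m) (mreindex (ρ ⊗ₖ ω)) (mreindex (σ ⊗ₖ τ)) = D n ρ σ + D m ω τ

/-- The conditional entropy `log₂|A| − 𝐃(ρ_{AB} ‖ u_A ⊗ ρ_B)` induced by a relative
entropy `𝐃`, valued in the extended reals. -/
def RelEntropy.condH (Dd : RelEntropy) (a b : ℕ)
    (ρ : Matrix (Fin a × Fin b) (Fin a × Fin b) ℂ) : EReal :=
  ((Real.logb 2 a : ℝ) : EReal) -
    ((Dd.D (a * b) (mreindex ρ) (mreindex (unif a ⊗ₖ trA ρ)) : ℝ≥0∞) : EReal)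

/-!
Each summand `𝒟⁽ʲ⁾ ⊗ ℱ⁽ʲ⁾` is completely positive: its Choi matrix is a reindexed Kronecker
product of the Choi matrix of `ℱ⁽ʲ⁾` with that of `𝒟⁽ʲ⁾`, which is diagonal with the
nonnegative entries of `D⁽ʲ⁾`. Since the columns of `D⁽ʲ⁾` sum to one, `𝒟⁽ʲ⁾` is trace
preserving, so tracing out the first factor gives `Tr_A ∘ 𝒩 = (∑ⱼ ℱ⁽ʲ⁾) ∘ Tr_A`. This yields
that `𝒩` is trace preserving, and semi-causality because `M ⊗ id` leaves `Tr_A` unchanged for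
every channel `M`. Since the rows of `D⁽ʲ⁾` sum to one, `𝒟⁽ʲ⁾` is unital, hence
`𝒩 (u ⊗ ρ) = u ⊗ ∑ⱼ ℱ⁽ʲ⁾ ρ`, and `∑ⱼ ℱ⁽ʲ⁾ ρ` is a state because each `ℱ⁽ʲ⁾` is positive and
their sum is trace preserving.
-/

lemma isLinearMap_finsetSum {R E G ι : Type*} [Semiring R] [AddCommMonoid E] [Module R E]
    [AddCommMonoid G] [Module R G] (s : Finset ι) {N : ι → E → G}
    (hN : ∀ i, IsLinearMap R (N i)) : IsLinearMap R fun x => ∑ i ∈ s, N i x where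
  map_add x y := by simp only [(hN _).map_add, Finset.sum_add_distrib]
  map_smul c x := by simp only [(hN _).map_smul, Finset.smul_sum]

lemma kronecker_finsetSum {R l m n p ι : Type*} [NonUnitalNonAssocSemiring R]
    (A : Matrix l m R) (s : Finset ι) (B : ι → Matrix n p R) :
    A ⊗ₖ ∑ i ∈ s, B i = ∑ i ∈ s, A ⊗ₖ B i := by
  ext x y
  simp [Matrix.sum_apply, Finset.mul_sum]

section ChoiMatrix

variable {α β : Type} [Fintype α] [DecidableEq α]

lemma IsLinearMap.eq_sum_single {N : Matrix α α ℂ → Matrix β β ℂ} (hN : IsLinearMap ℂ N)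
    (X : Matrix α α ℂ) : N X = ∑ i, ∑ j, X i j • N (single i j 1) := by
  conv_lhs => rw [matrix_eq_sum_single X]
  simp only [← IsLinearMap.mk'_apply hN, map_sum]
  refine Finset.sum_congr rfl fun i _ => Finset.sum_congr rfl fun j _ => ?_
  rw [show single i j (X i j) = X i j • single i j 1 by rw [smul_single, smul_eq_mul, mul_one],
    LinearMap.map_smul]

variable [Fintype β]

lemma choiMatrix_apply (N : Matrix α α ℂ → Matrix β β ℂ) (i j : α) (b b' : β) :
    choiMatrix N (i, b) (j, b') = N (single i j 1) b b' := by
  simp [choiMatrix, Matrix.sum_apply, single_apply, ite_and]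

lemma choiMatrix_sum {ι : Type} (s : Finset ι) (N : ι → Matrix α α ℂ → Matrix β β ℂ) :
    choiMatrix (fun X => ∑ i ∈ s, N i X) = ∑ i ∈ s, choiMatrix (N i) := by
  ext ⟨i, b⟩ ⟨j, b'⟩
  simp [choiMatrix_apply, Matrix.sum_apply]

lemma IsLinearMap.map_vecMulVec_eq_conjTranspose_mul_choiMatrix_mul [DecidableEq β]
    {N : Matrix α α ℂ → Matrix β β ℂ} (hN : IsLinearMap ℂ N) (v : α → ℂ) :
    let W : Matrix (α × β) β ℂ := of fun p b => if p.2 = b then star (v p.1) else 0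
    N (vecMulVec v (star v)) = Wᴴ * choiMatrix N * W := by
  intro W
  ext b b'
  rw [hN.eq_sum_single]
  simp only [W, Matrix.sum_apply, Matrix.smul_apply, smul_eq_mul, mul_apply,
    conjTranspose_apply, of_apply, Fintype.sum_prod_type, choiMatrix_apply, vecMulVec_apply,
    apply_ite star, star_star, star_zero, ite_mul, mul_ite, zero_mul, mul_zero,
    Finset.sum_ite_eq', Finset.mem_univ, if_true, Finset.sum_mul, Pi.star_apply]
  rw [Finset.sum_comm]
  exact Finset.sum_congr rfl fun l _ => Finset.sum_congr rfl fun l' _ => by ring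

lemma posSemidef_map_of_posSemidef_choiMatrix {N : Matrix α α ℂ → Matrix β β ℂ}
    (hN : IsLinearMap ℂ N) (hcp : (choiMatrix N).PosSemidef) {ρ : Matrix α α ℂ}
    (hρ : ρ.PosSemidef) : (N ρ).PosSemidef := by
  classical
  obtain ⟨r, v, rfl⟩ := posSemidef_iff_eq_sum_vecMulVec.mp hρ
  rw [← IsLinearMap.mk'_apply hN, map_sum]
  refine posSemidef_sum _ fun i _ => ?_
  rw [IsLinearMap.mk'_apply, hN.map_vecMulVec_eq_conjTranspose_mul_choiMatrix_mul]
  exact hcp.conjTranspose_mul_mul_same _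

end ChoiMatrix

section PartialTrace

variable {α β : Type} [Fintype α]

lemma trA_sum {ι : Type} (s : Finset ι) (X : ι → Matrix (α × β) (α × β) ℂ) :
    trA (∑ i ∈ s, X i) = ∑ i ∈ s, trA (X i) := by
  ext j j'
  simp only [trA, of_apply, Matrix.sum_apply]
  exact Finset.sum_comm

lemma trA_smul (c : ℂ) (X : Matrix (α × β) (α × β) ℂ) : trA (c • X) = c • trA X := by
  ext j j'
  simp [trA, Finset.mul_sum]

lemma trA_kronecker (A : Matrix α α ℂ) (B : Matrix β β ℂ) : trA (A ⊗ₖ B) = A.trace • B := by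
  ext j j'
  simp [trA, trace, Finset.sum_mul]

lemma trace_trA [Fintype β] (X : Matrix (α × β) (α × β) ℂ) : (trA X).trace = X.trace := by
  simp only [trace, diag, trA, of_apply, Fintype.sum_prod_type]
  exact Finset.sum_comm

lemma trA_tensorIdRight {a a' : ℕ} (b : ℕ)
    {M : Matrix (Fin a) (Fin a) ℂ → Matrix (Fin a') (Fin a') ℂ}
    (hM : ∀ X, (M X).trace = X.trace) (X : Matrix (Fin a × Fin b) (Fin a × Fin b) ℂ) :
    trA (tensorIdRight b M X) = trA X := by
  ext j j'
  simpa [trA, tensorIdRight, trace] using hM (of fun k k' => X (k, j) (k', j'))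

end PartialTrace

section TensorMap

variable {m m' n n' : ℕ}

lemma isLinearMap_tensorMap (M : Matrix (Fin m) (Fin m) ℂ → Matrix (Fin m') (Fin m') ℂ)
    (F : Matrix (Fin n) (Fin n) ℂ → Matrix (Fin n') (Fin n') ℂ) :
    IsLinearMap ℂ (tensorMap M F) where
  map_add X Y := by simp only [tensorMap, Matrix.add_apply, add_smul, Finset.sum_add_distrib]
  map_smul c X := by simp only [tensorMap, Matrix.smul_apply, smul_eq_mul, mul_smul,
    Finset.smul_sum]

variable {M : Matrix (Fin m) (Fin m) ℂ → Matrix (Fin m') (Fin m') ℂ}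
  {F : Matrix (Fin n) (Fin n) ℂ → Matrix (Fin n') (Fin n') ℂ}

lemma tensorMap_kronecker (hM : IsLinearMap ℂ M) (hF : IsLinearMap ℂ F)
    (A : Matrix (Fin m) (Fin m) ℂ) (B : Matrix (Fin n) (Fin n) ℂ) :
    tensorMap M F (A ⊗ₖ B) = M A ⊗ₖ F B := by
  rw [hM.eq_sum_single A, hF.eq_sum_single B]
  ext ⟨y, b⟩ ⟨y', b'⟩
  simp only [tensorMap, Matrix.sum_apply, Matrix.smul_apply, kroneckerMap_apply, smul_eq_mul,
    Finset.sum_mul]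
  simp only [Finset.mul_sum]
  refine Finset.sum_congr rfl fun k _ => Finset.sum_congr rfl fun k' _ =>
    Finset.sum_congr rfl fun l _ => Finset.sum_congr rfl fun l' _ => by ring

lemma choiMatrix_tensorMap (hM : IsLinearMap ℂ M) (hF : IsLinearMap ℂ F) :
    choiMatrix (tensorMap M F) =
      (choiMatrix M ⊗ₖ choiMatrix F).submatrix (Equiv.prodProdProdComm _ _ _ _)
        (Equiv.prodProdProdComm _ _ _ _) := by
  ext ⟨⟨k, l⟩, y, b⟩ ⟨⟨k', l'⟩, y', b'⟩
  rw [choiMatrix_apply, ← one_mul (1 : ℂ), ← single_kronecker_single, tensorMap_kronecker hM hF]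
  simp [choiMatrix_apply]

lemma posSemidef_choiMatrix_tensorMap (hM : IsLinearMap ℂ M) (hF : IsLinearMap ℂ F)
    (hMcp : (choiMatrix M).PosSemidef) (hFcp : (choiMatrix F).PosSemidef) :
    (choiMatrix (tensorMap M F)).PosSemidef := by
  rw [choiMatrix_tensorMap hM hF]
  exact (hMcp.kronecker hFcp).submatrix _

lemma trA_tensorMap (hM : ∀ X, (M X).trace = X.trace) (hF : IsLinearMap ℂ F)
    (X : Matrix (Fin m × Fin n) (Fin m × Fin n) ℂ) :
    trA (tensorMap M F X) = F (trA X) := by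
  have htr (k k' : Fin m) : (single k k' (1 : ℂ)).trace = if k = k' then 1 else 0 := by
    split_ifs with h
    · rw [h, trace_single_eq_same]
    · exact trace_single_eq_of_ne _ _ _ h
  rw [hF.eq_sum_single (trA X)]
  simp only [tensorMap, trA_sum, trA_smul, trA_kronecker, hM, htr, ite_smul, one_smul,
    zero_smul, smul_ite, smul_zero]
  simp only [Finset.sum_ite_irrel, Finset.sum_const_zero, Finset.sum_ite_eq, Finset.mem_univ,
    if_true, trA, of_apply, Finset.sum_smul]
  rw [Finset.sum_comm]
  refine Finset.sum_congr rfl fun l _ => ?_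
  exact Finset.sum_comm

end TensorMap

section DoublyStochastic

variable {m : ℕ} {D : Matrix (Fin m) (Fin m) ℝ}

lemma dsChannel_eq_diagonal (D : Matrix (Fin m) (Fin m) ℝ) (ρ : Matrix (Fin m) (Fin m) ℂ) :
    dsChannel D ρ = diagonal fun y => ∑ x, (D y x : ℂ) * ρ x x := by
  ext y y'
  by_cases h : y = y'
  · subst h
    simp [dsChannel, single_apply, Matrix.sum_apply]
  · have hne (x : Fin m) : ¬(x = y ∧ x = y') := fun hx => h (hx.1.symm.trans hx.2)
    simp [dsChannel, Matrix.sum_apply, h, hne]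

lemma isLinearMap_dsChannel (D : Matrix (Fin m) (Fin m) ℝ) : IsLinearMap ℂ (dsChannel D) where
  map_add X Y := by
    simp only [dsChannel_eq_diagonal, Matrix.add_apply, mul_add, Finset.sum_add_distrib,
      diagonal_add]
  map_smul c X := by
    rw [dsChannel_eq_diagonal, dsChannel_eq_diagonal, ← diagonal_smul]
    congr 1
    ext y
    simp only [Pi.smul_apply, Matrix.smul_apply, smul_eq_mul, Finset.mul_sum]
    exact Finset.sum_congr rfl fun x _ => by ring

lemma trace_dsChannel (hcol : ∀ x, ∑ y, D y x = 1) (ρ : Matrix (Fin m) (Fin m) ℂ) :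
    (dsChannel D ρ).trace = ρ.trace := by
  rw [dsChannel_eq_diagonal, trace_diagonal, Finset.sum_comm]
  refine Finset.sum_congr rfl fun x _ => ?_
  rw [← Finset.sum_mul, ← Complex.ofReal_sum, hcol, Complex.ofReal_one, one_mul]
  rfl

lemma dsChannel_smul_one (hrow : ∀ y, ∑ x, D y x = 1) (c : ℂ) :
    dsChannel D (c • 1) = c • 1 := by
  rw [dsChannel_eq_diagonal]
  conv_rhs => rw [smul_one_eq_diagonal]
  congr 1
  ext y
  simp only [Matrix.smul_apply, one_apply_eq, smul_eq_mul, mul_one, ← Finset.sum_mul]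
  rw [← Complex.ofReal_sum, hrow, Complex.ofReal_one, one_mul]

lemma choiMatrix_dsChannel (D : Matrix (Fin m) (Fin m) ℝ) :
    choiMatrix (dsChannel D) = diagonal fun p => (D p.2 p.1 : ℂ) := by
  ext ⟨x, y⟩ ⟨x', y'⟩
  by_cases h : x = x'
  · subst h
    simp [choiMatrix_apply, dsChannel_eq_diagonal, diagonal_apply, single_apply]
  · have hne (z : Fin m) : ¬(x = z ∧ x' = z) := fun hz => h (hz.1.trans hz.2.symm)
    simp [choiMatrix_apply, dsChannel_eq_diagonal, diagonal_apply, h, hne]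

lemma isChannel_dsChannel (hnn : ∀ x x', 0 ≤ D x x') (hcol : ∀ x, ∑ y, D y x = 1) :
    IsChannel (dsChannel D) := by
  refine ⟨isLinearMap_dsChannel D, trace_dsChannel hcol, ?_⟩
  rw [choiMatrix_dsChannel]
  exact PosSemidef.diagonal fun p => Complex.zero_le_real.mpr (hnn _ _)

end DoublyStochastic

/-- A conditionally doubly stochastic channel `∑ j, 𝒟⁽ʲ⁾ ⊗ ℱ⁽ʲ⁾` is a quantum channel
that is locally balanced, i.e. both conditionally unital and semi-causal. -/
theorem cds_locallyBalanced {m n n' k : ℕ}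
    (D : Fin k → Matrix (Fin m) (Fin m) ℝ) (hD : ∀ j, IsDoublyStochastic (D j))
    (F : Fin k → (Matrix (Fin n) (Fin n) ℂ → Matrix (Fin n') (Fin n') ℂ))
    (hFlin : ∀ j, IsLinearMap ℂ (F j))
    (hFcp : ∀ j, (choiMatrix (F j)).PosSemidef)
    (hFtp : ∀ X : Matrix (Fin n) (Fin n) ℂ, (∑ j, F j X).trace = X.trace) :
    IsChannel (fun X => ∑ j, tensorMap (dsChannel (D j)) (F j) X) ∧
    CondUnital (fun X => ∑ j, tensorMap (dsChannel (D j)) (F j) X) ∧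
    SemiCausal (fun X => ∑ j, tensorMap (dsChannel (D j)) (F j) X) := by
  have hDchannel (j : Fin k) : IsChannel (dsChannel (D j)) :=
    isChannel_dsChannel (hD j).1 (hD j).2.2
  have htrA (X : Matrix (Fin m × Fin n) (Fin m × Fin n) ℂ) :
      trA (∑ j, tensorMap (dsChannel (D j)) (F j) X) = ∑ j, F j (trA X) := by
    simp only [trA_sum, trA_tensorMap (hDchannel _).2.1 (hFlin _)]
  refine ⟨⟨isLinearMap_finsetSum _ fun j => isLinearMap_tensorMap _ _, fun X => ?_, ?_⟩,
    fun ρ hρ => ⟨∑ j, F j ρ, ⟨?_, ?_⟩, ?_⟩, fun M hM X => ?_⟩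
  · rw [← trace_trA, htrA, hFtp, trace_trA]
  · rw [choiMatrix_sum]
    exact posSemidef_sum _ fun j _ =>
      posSemidef_choiMatrix_tensorMap (hDchannel j).1 (hFlin j) (hDchannel j).2.2 (hFcp j)
  · exact posSemidef_sum _ fun j _ =>
      posSemidef_map_of_posSemidef_choiMatrix (hFlin j) (hFcp j) hρ.1
  · rw [hFtp, hρ.2]
  · simp only [tensorMap_kronecker (hDchannel _).1 (hFlin _), unif, dsChannel_smul_one (hD _).2.1,
      kronecker_finsetSum]
  · rw [htrA, htrA, trA_tensorIdRight _ hM.2.1]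
end
end

section
/- Let 𝐇 be an entropy. Then 𝐇(ρ) ≥ 0 for every state ρ of every finite dimension. -/
open Matrix Kronecker BigOperators
open scoped ENNReal ComplexOrder

noncomputable section

/-!
Additivity on `1 ⊗ 1` forces `H(1) = 0` for the one-dimensional state. Any state `ρ` on `ℂⁿ`
is reached from it in two majorization steps: the isometric embedding `ℂ → ℂⁿ` onto the line of
a basis vector `e_z` produces the pure state `|z⟩⟨z|`, and for `n ≥ 2` the measure-and-prepare
channel `X ↦ ⟨z|X|z⟩ ρ + Tr((1 - |z⟩⟨z|) X) (1 - ρ)/(n - 1)` is unital and sends `|z⟩⟨z|` to `ρ`.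
Monotonicity then gives `0 = H(1) ≤ H(|z⟩⟨z|) ≤ H(ρ)`.
-/

open scoped MatrixOrder in
theorem IsState.posSemidef_one_sub {α : Type} [Fintype α] [DecidableEq α] {ρ : Matrix α α ℂ}
    (hρ : IsState ρ) : (1 - ρ).PosSemidef := by
  obtain ⟨hpsd, htr⟩ := hρ
  rw [← Matrix.le_iff, CFC.le_one_iff (R := ℝ) ρ hpsd.1, hpsd.1.spectrum_real_eq_range_eigenvalues]
  rintro _ ⟨i, rfl⟩
  have hsum : ∑ j, hpsd.1.eigenvalues j = 1 := by
    apply Complex.ofReal_injective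
    simpa using hpsd.1.trace_eq_sum_eigenvalues.symm.trans htr
  rw [← hsum]
  exact Finset.single_le_sum (fun j _ => hpsd.eigenvalues_nonneg j) (Finset.mem_univ i)

theorem IsState.nonempty {α : Type} [Fintype α] {ρ : Matrix α α ℂ} (hρ : IsState ρ) :
    Nonempty α := by
  by_contra h
  rw [not_nonempty_iff] at h
  simpa [Matrix.trace] using hρ.2

theorem IsState.eq_one_of_fin_one {ρ : Matrix (Fin 1) (Fin 1) ℂ} (hρ : IsState ρ) : ρ = 1 := by
  ext i j
  obtain rfl := Subsingleton.elim i 0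
  obtain rfl := Subsingleton.elim j 0
  simpa [Matrix.trace] using hρ.2

theorem isState_single {α : Type} [Fintype α] [DecidableEq α] (z : α) :
    IsState (Matrix.single z z (1 : ℂ)) := by
  refine ⟨?_, by simp⟩
  simpa [Matrix.single_mul_single_same] using
    Matrix.posSemidef_conjTranspose_mul_self (Matrix.single (0 : Fin 1) z (1 : ℂ))

theorem isState_one_fin_one : IsState (1 : Matrix (Fin 1) (Fin 1) ℂ) :=
  ⟨Matrix.PosSemidef.one, by simp⟩

theorem choiMatrix_apply_s12 {α β : Type} [Fintype α] [DecidableEq α] [Fintype β]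
    (N : Matrix α α ℂ → Matrix β β ℂ) (i j : α) (k l : β) :
    choiMatrix N (i, k) (j, l) = N (Matrix.single i j 1) k l := by
  simp [choiMatrix, Matrix.sum_apply, Matrix.single_apply, ite_and]

def measurePrepare {ι α β : Type} [Fintype ι] [Fintype α] (P : ι → Matrix α α ℂ)
    (ω : ι → Matrix β β ℂ) (X : Matrix α α ℂ) : Matrix β β ℂ :=
  ∑ k, (P k * X).trace • ω k

section measurePrepare

variable {ι α β : Type} [Fintype ι] [Fintype α] [DecidableEq α] [Fintype β]
  {P : ι → Matrix α α ℂ} {ω : ι → Matrix β β ℂ}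

theorem choiMatrix_measurePrepare :
    choiMatrix (measurePrepare P ω) = ∑ k, (P k)ᵀ ⊗ₖ ω k := by
  ext ⟨i, k⟩ ⟨j, l⟩
  simp [choiMatrix_apply_s12, measurePrepare, Matrix.sum_apply, Matrix.trace_mul_single]

theorem isChannel_measurePrepare (hP : ∀ k, (P k).PosSemidef) (hsum : ∑ k, P k = 1)
    (hω : ∀ k, IsState (ω k)) : IsChannel (measurePrepare P ω) := by
  refine ⟨⟨fun X Y => ?_, fun c X => ?_⟩, fun X => ?_, ?_⟩
  · simp [measurePrepare, Matrix.mul_add, add_smul, Finset.sum_add_distrib]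
  · simp [measurePrepare, Finset.smul_sum, smul_smul]
  · calc (measurePrepare P ω X).trace = ∑ k, (P k * X).trace := by
          simp [measurePrepare, Matrix.trace_sum, (hω _).2]
      _ = X.trace := by rw [← Matrix.trace_sum, ← Finset.sum_mul, hsum, Matrix.one_mul]
  · rw [choiMatrix_measurePrepare]
    exact Matrix.posSemidef_sum _ fun k _ => (hP k).transpose.kronecker (hω k).1

end measurePrepare

theorem Entropy.H_one (E : Entropy) : E.H 1 1 = 0 := by
  have h := E.additive 1 1 1 1 isState_one_fin_one isState_one_fin_one
  have h1 : mreindex ((1 : Matrix (Fin 1) (Fin 1) ℂ) ⊗ₖ (1 : Matrix (Fin 1) (Fin 1) ℂ)) = 1 := by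
    simp [mreindex]
  rw [h1] at h
  linarith

theorem maj_one_single {n : ℕ} (z : Fin n) :
    Maj (1 : Matrix (Fin 1) (Fin 1) ℂ) (Matrix.single z z 1) := by
  have hN : IsChannel (measurePrepare (fun _ : Unit => (1 : Matrix (Fin 1) (Fin 1) ℂ))
      (fun _ => (1 : Matrix (Fin 1) (Fin 1) ℂ))) :=
    isChannel_measurePrepare (fun _ => .one) (by simp) (fun _ => isState_one_fin_one)
  refine Or.inl ⟨z.pos, Matrix.single z 0 1, _, ?_, hN, ?_, ?_⟩
  · ext i j
    obtain rfl := Subsingleton.elim i 0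
    obtain rfl := Subsingleton.elim j 0
    simp
  · simp [measurePrepare]
  · simp [measurePrepare, Matrix.single_mul_single_same]

theorem maj_single_of_isState {n : ℕ} (hn : 2 ≤ n) {ρ : Matrix (Fin n) (Fin n) ℂ}
    (hρ : IsState ρ) (z : Fin n) : Maj (Matrix.single z z 1) ρ := by
  set P := Matrix.single z z (1 : ℂ)
  have hP : IsState P := isState_single z
  have hn1 : (n : ℂ) - 1 ≠ 0 := by
    rw [sub_ne_zero]
    exact_mod_cast (by omega : n ≠ 1)
  set τ := ((n : ℂ) - 1)⁻¹ • (1 - ρ)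
  have hτ : IsState τ := by
    refine ⟨hρ.posSemidef_one_sub.smul (inv_nonneg.mpr (sub_nonneg.mpr ?_)), ?_⟩
    · exact_mod_cast (by omega : 1 ≤ n)
    · simp only [τ, Matrix.trace_smul, Matrix.trace_sub, Matrix.trace_one, Fintype.card_fin, hρ.2,
        smul_eq_mul]
      exact inv_mul_cancel₀ hn1
  have hN : IsChannel (measurePrepare ![P, 1 - P] ![ρ, τ]) :=
    isChannel_measurePrepare (Fin.forall_fin_two.2 ⟨hP.1, hP.posSemidef_one_sub⟩) (by simp)
      (Fin.forall_fin_two.2 ⟨hρ, hτ⟩)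
  refine Or.inl ⟨le_rfl, 1, _, by simp, hN, ?_, ?_⟩
  · simp [measurePrepare, Matrix.trace_sub, hP.2, τ, smul_smul, mul_inv_cancel₀ hn1]
  · simp [measurePrepare, P, Matrix.sub_mul, Matrix.single_mul_single_same]

/-- Every entropy is non-negative on every state. -/
theorem entropy_nonneg (E : Entropy) (n : ℕ) (ρ : Matrix (Fin n) (Fin n) ℂ)
    (hρ : IsState ρ) :
    0 ≤ E.H n ρ := by
  obtain ⟨z⟩ := hρ.nonempty
  obtain rfl | hn : n = 1 ∨ 2 ≤ n := by have := z.pos; omega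
  · rw [hρ.eq_one_of_fin_one, E.H_one]
  · calc 0 = E.H 1 1 := E.H_one.symm
      _ ≤ E.H n (Matrix.single z z 1) :=
        E.mono _ _ _ _ isState_one_fin_one (isState_single z) (maj_one_single z)
      _ ≤ E.H n ρ := E.mono _ _ _ _ (isState_single z) hρ (maj_single_of_isState hn hρ z)
end
end
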